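/- arXiv:2205.13501 — 3 statements merged into one kernel-verified Lean document; each statement's English description precedes it below -/
import Mathlib

section
/- Let ‖·‖ be a norm on ℝⁿ and let ‖γ‖_* := sup_{‖w‖ ≤ 1} γᵀw denote its dual norm. For γ ∈ ℝⁿ and v ∈ ℝ define h_γ(w) := log(1 + exp(−γᵀw + v)). Then for every λ > 0 and every ŵ ∈ ℝⁿ: if ‖γ‖_* ≤ λ, then sup_{w ∈ ℝⁿ} { h_γ(w) − λ‖ŵ − w‖ } = h_γ(ŵ); and if ‖γ‖_* > λ, then sup_{w ∈ ℝⁿ} { h_γ(w) − λ‖ŵ − w‖ } = +∞. -/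
/-!
The key inequality is `γᵀu ≤ ‖γ‖_* ‖u‖`; the dual norm is finite because on a
finite-dimensional space a linear functional is bounded by a multiple of any norm.
If `‖γ‖_* ≤ λ`, then `h_γ(w) - h_γ(ŵ) ≤ γᵀ(ŵ - w) ≤ λ‖ŵ - w‖`, since `log (1 + exp ·)`
grows by at most `d ≥ 0` when its argument grows by `d`. If `‖γ‖_* > λ`, pick `‖u‖ ≤ 1`
with `γᵀu > λ`: along `w = ŵ - c u`, and using `x ≤ log (1 + exp x)`, the objective is
at least an affine function of `c` with slope `γᵀu - λ > 0`.
-/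

open Real Filter Set

noncomputable def Seminorm.dualNorm {E : Type*} [AddCommGroup E] [Module ℝ E]
    (p : Seminorm ℝ E) (f : Module.Dual ℝ E) : ℝ :=
  sSup {t : ℝ | ∃ w : E, p w ≤ 1 ∧ t = f w}

theorem Seminorm.exists_norm_le_mul_of_finiteDimensional {𝕜 E F : Type*}
    [NontriviallyNormedField 𝕜] [CompleteSpace 𝕜] [AddCommGroup E] [Module 𝕜 E]
    [FiniteDimensional 𝕜 E] [NormedAddCommGroup F] [NormedSpace 𝕜 F]
    (p : Seminorm 𝕜 E) (hp : ∀ w, p w = 0 → w = 0) (f : E →ₗ[𝕜] F) :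
    ∃ C, ∀ w, ‖f w‖ ≤ C * p w := by
  let _ : Norm E := ⟨p⟩
  have core : NormedSpace.Core 𝕜 E :=
    { norm_nonneg := apply_nonneg p
      norm_smul := map_smul_eq_mul p
      norm_triangle := map_add_le_add p
      norm_eq_zero_iff := fun w => ⟨hp w, fun hw => hw ▸ map_zero p⟩ }
  let _ := NormedAddCommGroup.ofCore core
  let _ := NormedSpace.ofCore core
  exact ⟨_, (LinearMap.toContinuousLinearMap f).le_opNorm⟩

theorem EReal.iSup_coe_eq_top {ι : Type*} {g : ι → ℝ} (hg : ¬BddAbove (range g)) :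
    ⨆ i, (g i : EReal) = ⊤ := by
  refine iSup_eq_top.2 fun b hb => ?_
  obtain ⟨r, hbr, -⟩ := EReal.lt_iff_exists_real_btwn.1 hb
  obtain ⟨_, ⟨i, rfl⟩, hi⟩ := not_bddAbove_iff.1 hg r
  exact ⟨i, hbr.trans (EReal.coe_lt_coe_iff.2 hi)⟩

theorem le_log_one_add_exp (x : ℝ) : x ≤ log (1 + exp x) := by
  calc x = log (exp x) := (log_exp x).symm
    _ ≤ log (1 + exp x) := log_le_log (exp_pos x) (by linarith)

theorem log_one_add_exp_le_add {a b d : ℝ} (hd : 0 ≤ d) (h : a ≤ b + d) :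
    log (1 + exp a) ≤ log (1 + exp b) + d := by
  have hexp : 1 + exp a ≤ exp d * (1 + exp b) := by
    have : exp a ≤ exp d * exp b := by rw [← exp_add]; exact exp_le_exp.2 (by linarith)
    nlinarith [one_le_exp hd]
  calc log (1 + exp a) ≤ log (exp d * (1 + exp b)) := log_le_log (by positivity) hexp
    _ = log (1 + exp b) + d := by
      rw [log_mul (exp_ne_zero d) (by positivity), log_exp, add_comm]

namespace Seminorm

variable {E : Type*} [AddCommGroup E] [Module ℝ E] (p : Seminorm ℝ E) (f : Module.Dual ℝ E)

theorem bddAbove_dualNorm_set [FiniteDimensional ℝ E] (hp : ∀ w, p w = 0 → w = 0) :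
    BddAbove {t : ℝ | ∃ w : E, p w ≤ 1 ∧ t = f w} := by
  obtain ⟨C, hC⟩ := p.exists_norm_le_mul_of_finiteDimensional hp f
  refine ⟨max C 0, ?_⟩
  rintro _ ⟨w, hw, rfl⟩
  calc f w ≤ ‖f w‖ := le_abs_self _
    _ ≤ C * p w := hC w
    _ ≤ max C 0 * p w := mul_le_mul_of_nonneg_right (le_max_left _ _) (apply_nonneg p w)
    _ ≤ max C 0 := mul_le_of_le_one_right (le_max_right _ _) hw

theorem le_dualNorm_mul [FiniteDimensional ℝ E] (hp : ∀ w, p w = 0 → w = 0) (u : E) :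
    f u ≤ p.dualNorm f * p u := by
  rcases eq_or_ne u 0 with rfl | hu
  · simp
  have hpu : 0 < p u := (apply_nonneg p u).lt_of_ne fun h => hu (hp u h.symm)
  have hunit : f ((p u)⁻¹ • u) ≤ p.dualNorm f :=
    le_csSup (p.bddAbove_dualNorm_set f hp)
      ⟨(p u)⁻¹ • u, by rw [map_smul_eq_mul, norm_inv, norm_of_nonneg hpu.le,
        inv_mul_cancel₀ hpu.ne'], rfl⟩
  rw [map_smul, smul_eq_mul, inv_mul_le_iff₀ hpu] at hunit
  linarith

variable (v lam : ℝ) (what : E)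

theorem iSup_log_one_add_exp_sub_eq_of_dualNorm_le [FiniteDimensional ℝ E]
    (hp : ∀ w, p w = 0 → w = 0) (hlam : 0 ≤ lam) (h : p.dualNorm f ≤ lam) :
    ⨆ w, ((log (1 + exp (-f w + v)) - lam * p (what - w) : ℝ) : EReal)
      = ((log (1 + exp (-f what + v)) : ℝ) : EReal) := by
  refine le_antisymm (iSup_le fun w => EReal.coe_le_coe_iff.2 ?_) (le_iSup_of_le what (by simp))
  have hdual : f (what - w) ≤ lam * p (what - w) :=
    (p.le_dualNorm_mul f hp _).trans (mul_le_mul_of_nonneg_right h (apply_nonneg p _))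
  have := log_one_add_exp_le_add (a := -f w + v) (b := -f what + v)
    (mul_nonneg hlam (apply_nonneg p _)) (by rw [map_sub] at hdual; linarith)
  linarith

theorem iSup_log_one_add_exp_sub_eq_top_of_lt_dualNorm (hlam : 0 ≤ lam)
    (h : lam < p.dualNorm f) :
    ⨆ w, ((log (1 + exp (-f w + v)) - lam * p (what - w) : ℝ) : EReal) = ⊤ := by
  obtain ⟨_, ⟨u, hu, rfl⟩, hlt⟩ := exists_lt_of_lt_csSup (by exact ⟨0, 0, by simp, by simp⟩) h
  set g : E → ℝ := fun w => log (1 + exp (-f w + v)) - lam * p (what - w)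
  have hray : ∀ c : ℝ, 0 ≤ c → -f what + v + c * (f u - lam) ≤ g (what - c • u) := by
    intro c hc
    have hlog := le_log_one_add_exp (-f (what - c • u) + v)
    have hnorm : lam * p (c • u) ≤ lam * c := by
      rw [map_smul_eq_mul, norm_of_nonneg hc]
      exact mul_le_mul_of_nonneg_left (mul_le_of_le_one_right hc hu) hlam
    simp only [g, sub_sub_cancel, map_sub, map_smul, smul_eq_mul] at hlog hnorm ⊢
    linarith
  have htend : Tendsto (fun c : ℝ => g (what - c • u)) atTop atTop :=
    tendsto_atTop_mono' _ ((eventually_ge_atTop 0).mono hray)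
      (tendsto_atTop_add_const_left _ _ (tendsto_id.atTop_mul_const (sub_pos.2 hlt)))
  exact EReal.iSup_coe_eq_top fun hbdd =>
    not_bddAbove_of_tendsto_atTop htend (hbdd.mono (range_comp_subset_range _ g))

end Seminorm

/-- Let `nrm` be a norm on `ℝⁿ` with dual norm
`‖γ‖_* = sup {γᵀw : nrm w ≤ 1}`, and let `h_γ(w) = log (1 + exp (-γᵀw + v))`.
Then for every `λ > 0` and every `ŵ`:
if `‖γ‖_* ≤ λ` then `sup_w { h_γ(w) - λ · nrm (ŵ - w) } = h_γ(ŵ)` (computed in `EReal`),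
and if `‖γ‖_* > λ` then this supremum equals `+∞`. -/
theorem sup_softplus_sub_norm (n : ℕ) (nrm : (Fin n → ℝ) → ℝ)
    (hnrm_def : ∀ w, nrm w = 0 ↔ w = 0)
    (hnrm_smul : ∀ (c : ℝ) (w : Fin n → ℝ), nrm (c • w) = |c| * nrm w)
    (hnrm_add : ∀ w w', nrm (w + w') ≤ nrm w + nrm w')
    (γ : Fin n → ℝ) (v : ℝ) (lam : ℝ) (hlam : 0 < lam) (what : Fin n → ℝ)
    (dualNrm : ℝ)
    (hdual : dualNrm = sSup {t : ℝ | ∃ w : Fin n → ℝ, nrm w ≤ 1 ∧ t = ∑ i, γ i * w i}) :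
    (dualNrm ≤ lam →
      (⨆ w : Fin n → ℝ,
          ((Real.log (1 + Real.exp (-(∑ i, γ i * w i) + v)) - lam * nrm (what - w) : ℝ) : EReal))
        = ((Real.log (1 + Real.exp (-(∑ i, γ i * what i) + v)) : ℝ) : EReal)) ∧
    (lam < dualNrm →
      (⨆ w : Fin n → ℝ,
          ((Real.log (1 + Real.exp (-(∑ i, γ i * w i) + v)) - lam * nrm (what - w) : ℝ) : EReal))
        = ⊤) := by
  let p : Seminorm ℝ (Fin n → ℝ) :=
    Seminorm.of nrm hnrm_add fun c w => by rw [Real.norm_eq_abs, hnrm_smul]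
  let f : Module.Dual ℝ (Fin n → ℝ) := dotProductBilin ℝ ℝ γ
  obtain rfl : dualNrm = p.dualNorm f := hdual
  exact ⟨p.iSup_log_one_add_exp_sub_eq_of_dualNorm_le f v lam what
      (fun w => (hnrm_def w).1) hlam.le,
    p.iSup_log_one_add_exp_sub_eq_top_of_lt_dualNorm f v lam what hlam.le⟩
end

section
/- Fix m ≥ 1, integers k_j ≥ 2 for j ∈ [m], a block vector β_C = (β_{C,1}, …, β_{C,m}) with β_{C,j} ∈ ℝ^{k_j − 1}, y ∈ {−1, +1}, zⁱ ∈ C, λ ≥ 0, s, r ∈ ℝ and p > 0. Define G(z) := exp(−s − λ·d_C(z, zⁱ)) + exp(r − y·β_Cᵀz − s − λ·d_C(z, zⁱ)) for z ∈ C. For each j ∈ [m], let z_j^⋆ maximize −y·β_{C,j}ᵀz_j over C(k_j) ∖ {zⁱ_j} and set a_j := −y·β_{C,j}ᵀ(z_j^⋆ − zⁱ_j); let π : [m] → [m] be a bijection such that a_j is non-increasing along the order induced by π (i.e., π(j) < π(j') implies a_j ≥ a_{j'}); for δ ∈ {0, …, m}, define the candidate z^{(δ)} ∈ C by z^{(δ)}_j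 = z_j^⋆ if π(j) ≤ δ and z^{(δ)}_j = zⁱ_j otherwise. Then max_{z∈C} G(z) = max_{δ∈{0,…,m}} G(z^{(δ)}); that is, the maximum of G over the (exponentially large) set C is attained at one of the m + 1 greedily constructed candidates. -/
open scoped BigOperators ENNReal NNReal
open MeasureTheory

noncomputable section

namespace DRLR

/-- `catCube s` is the one-hot encoding set `C(s) = {z ∈ {0,1}^{s-1} : ∑ z_j ≤ 1}`
of a categorical feature with `s` possible values. -/
def catCube (s : ℕ) : Set (Fin (s - 1) → ℝ) :=
  {z | (∀ i, z i = 0 ∨ z i = 1) ∧ ∑ i, z i ≤ 1}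

variable (n m : ℕ) (k : Fin m → ℕ)

/-- Ambient space containing the categorical block `C = C(k₁) × ⋯ × C(k_m)`. -/
abbrev CatSpace := (j : Fin m) → Fin (k j - 1) → ℝ

/-- The predicate `z ∈ C`. -/
def memCat (z : CatSpace m k) : Prop := ∀ j, z j ∈ catCube (k j)

/-- Ambient feature-label space `ℝⁿ × (ambient categorical space) × ℝ`. -/
abbrev Amb := (Fin n → ℝ) × CatSpace m k × ℝ

/-- The feature-label support `Ξ = ℝⁿ × C × {-1, +1}` as a subset of the ambient space. -/
def XiSet : Set (Amb n m k) :=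
  {ξ | memCat m k ξ.2.1 ∧ (ξ.2.2 = -1 ∨ ξ.2.2 = 1)}

/-- `Ξ` as a (measurable) type. -/
abbrev Xi := {ξ : Amb n m k // ξ ∈ XiSet n m k}

/-- The categorical metric `d_C(z, z') = (∑_j 1[z_j ≠ z'_j])^{1/p}`. -/
def dCat (p : ℝ) (z z' : CatSpace m k) : ℝ :=
  (({j | z j ≠ z' j}.ncard : ℝ)) ^ (1 / p)

/-- The ground metric
`d(ξ, ξ') = ‖x - x'‖ + d_C(z, z') + κ·1[y ≠ y']` on the ambient space. -/
def gdist (nrm : (Fin n → ℝ) → ℝ) (κ p : ℝ) (ξ ξ' : Amb n m k) : ℝ :=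
  nrm (ξ.1 - ξ'.1) + dCat m k p ξ.2.1 ξ'.2.1 + κ * (if ξ.2.2 ≠ ξ'.2.2 then 1 else 0)

/-- The log-loss `l_β(x, z, y) = log (1 + exp (-y·(β₀ + β_Nᵀx + β_Cᵀz)))`. -/
def logloss (β₀ : ℝ) (βN : Fin n → ℝ) (βC : CatSpace m k) (ξ : Amb n m k) : ℝ :=
  Real.log (1 + Real.exp
    (-(ξ.2.2 * (β₀ + ∑ i, βN i * ξ.1 i + ∑ j, ∑ i, βC j i * ξ.2.1 j i))))

/-- The empirical distribution `P̂_N = (1/N) ∑ᵢ δ_{ξⁱ}`. -/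
def empMeasure (N : ℕ) (ξdata : Fin N → Xi n m k) : Measure (Xi n m k) :=
  (N : ℝ≥0∞)⁻¹ • ∑ i, Measure.dirac (ξdata i)

/-- Couplings of two probability measures on `Ξ`. -/
def couplings (Q P : Measure (Xi n m k)) : Set (Measure (Xi n m k × Xi n m k)) :=
  {π | IsProbabilityMeasure π ∧ π.fst = Q ∧ π.snd = P}

/-- The type-1 Wasserstein distance on probability measures over `Ξ`. -/
def wass (nrm : (Fin n → ℝ) → ℝ) (κ p : ℝ) (Q P : Measure (Xi n m k)) : ℝ≥0∞ :=
  ⨅ π ∈ couplings n m k Q P,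
    ∫⁻ q, ENNReal.ofReal (gdist n m k nrm κ p q.1.1 q.2.1) ∂π

/-- Expected log-loss (as an extended nonnegative real). -/
def expLoss (β₀ : ℝ) (βN : Fin n → ℝ) (βC : CatSpace m k) (Q : Measure (Xi n m k)) : ℝ≥0∞ :=
  ∫⁻ ξ, ENNReal.ofReal (logloss n m k β₀ βN βC ξ.1) ∂Q

/-- Worst-case expected log-loss over the Wasserstein ball `B_ε(P̂_N)`. -/
def worstCase (nrm : (Fin n → ℝ) → ℝ) (κ p ε : ℝ) (β₀ : ℝ) (βN : Fin n → ℝ)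
    (βC : CatSpace m k) (N : ℕ) (ξdata : Fin N → Xi n m k) : ℝ≥0∞ :=
  sSup {t : ℝ≥0∞ | ∃ Q : Measure (Xi n m k), IsProbabilityMeasure Q ∧
    wass n m k nrm κ p Q (empMeasure n m k N ξdata) ≤ ENNReal.ofReal ε ∧
    t = expLoss n m k β₀ βN βC Q}

/-- The dual norm `‖γ‖_* = sup {γᵀw : nrm w ≤ 1}`. -/
def dualNorm (nrm : (Fin n → ℝ) → ℝ) (γ : Fin n → ℝ) : ℝ :=
  sSup {t : ℝ | ∃ w : Fin n → ℝ, nrm w ≤ 1 ∧ t = ∑ i, γ i * w i}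

/-- Feasibility of `(λ, s)` in the dual reformulation for fixed `β`. -/
def feasibleDual (nrm : (Fin n → ℝ) → ℝ) (κ p : ℝ) (β₀ : ℝ) (βN : Fin n → ℝ)
    (βC : CatSpace m k) (N : ℕ) (ξdata : Fin N → Xi n m k)
    (lam : ℝ) (s : Fin N → ℝ) : Prop :=
  dualNorm n nrm βN ≤ lam ∧
  ∀ i : Fin N, ∀ z : CatSpace m k, memCat m k z →
    (logloss n m k β₀ βN βC ((ξdata i).1.1, z, (ξdata i).1.2.2)
        - lam * dCat m k p z (ξdata i).1.2.1 ≤ s i) ∧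
    (logloss n m k β₀ βN βC ((ξdata i).1.1, z, -(ξdata i).1.2.2)
        - lam * κ - lam * dCat m k p z (ξdata i).1.2.1 ≤ s i)

end DRLR


private lemma card_filter_val_lt (m δ : ℕ) (h : δ ≤ m) :
    (Finset.univ.filter (fun i : Fin m => (i : ℕ) < δ)).card = δ := by
  classical
  have himg : Finset.image Fin.val (Finset.univ.filter (fun i : Fin m => (i : ℕ) < δ))
      = Finset.range δ := by
    ext n
    simp only [Finset.mem_image, Finset.mem_filter, Finset.mem_univ, true_and,
      Finset.mem_range]
    constructor
    · rintro ⟨i, hi, rfl⟩; exact hi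
    · intro hn; exact ⟨⟨n, lt_of_lt_of_le hn h⟩, hn, rfl⟩
  calc (Finset.univ.filter (fun i : Fin m => (i : ℕ) < δ)).card
      = (Finset.image Fin.val (Finset.univ.filter (fun i : Fin m => (i : ℕ) < δ))).card :=
        (Finset.card_image_of_injective _ Fin.val_injective).symm
    _ = (Finset.range δ).card := by rw [himg]
    _ = δ := Finset.card_range δ

private lemma card_filter_perm_lt (m δ : ℕ) (h : δ ≤ m) (π : Equiv.Perm (Fin m)) :
    (Finset.univ.filter (fun j : Fin m => ((π j : Fin m) : ℕ) < δ)).card = δ := by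
  classical
  refine Eq.trans ?_ (card_filter_val_lt m δ h)
  apply Finset.card_bij' (fun j _ => π j) (fun i _ => π.symm i) <;> simp

private lemma sum_top (m : ℕ) (a : Fin m → ℝ) (π : Equiv.Perm (Fin m))
    (hπ : ∀ j j' : Fin m, (π j : ℕ) < (π j' : ℕ) → a j' ≤ a j)
    (D : Finset (Fin m)) :
    ∑ j ∈ D, a j ≤ ∑ j ∈ Finset.univ.filter (fun j : Fin m => (π j : ℕ) < D.card), a j := by
  classical
  set δ := D.card with hδ
  set T := Finset.univ.filter (fun j : Fin m => (π j : ℕ) < δ) with hT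
  have hδm : δ ≤ m := by
    simpa using Finset.card_le_univ D
  have hTcard : T.card = δ := card_filter_perm_lt m δ hδm π
  have hcards : (D \ T).card = (T \ D).card :=
    Finset.card_sdiff_comm (by rw [hTcard])
  have key : ∑ j ∈ D \ T, a j ≤ ∑ j ∈ T \ D, a j := by
    rcases (T \ D).eq_empty_or_nonempty with h | h
    · have hD : (D \ T) = ∅ := Finset.card_eq_zero.mp (by rw [hcards, h]; simp)
      simp [h, hD]
    · obtain ⟨j', hj', hmin⟩ := Finset.exists_min_image (T \ D) a h
      have hj'T : (π j' : ℕ) < δ := by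
        have := (Finset.mem_sdiff.mp hj').1
        simpa [hT] using this
      have h1 : ∑ j ∈ D \ T, a j ≤ (D \ T).card • a j' := by
        apply Finset.sum_le_card_nsmul
        intro j hj
        have hjT : ¬ (π j : ℕ) < δ := by
          have := (Finset.mem_sdiff.mp hj).2
          simpa [hT] using this
        exact hπ j' j (lt_of_lt_of_le hj'T (le_of_not_gt hjT))
      have h2 : (T \ D).card • a j' ≤ ∑ j ∈ T \ D, a j :=
        Finset.card_nsmul_le_sum _ _ _ (fun j hj => hmin j hj)
      calc ∑ j ∈ D \ T, a j ≤ (D \ T).card • a j' := h1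
        _ = (T \ D).card • a j' := by rw [hcards]
        _ ≤ ∑ j ∈ T \ D, a j := h2
  have e1 : ∑ j ∈ D ∩ T, a j + ∑ j ∈ D \ T, a j = ∑ j ∈ D, a j :=
    Finset.sum_inter_add_sum_sdiff D T a
  have e2 : ∑ j ∈ T ∩ D, a j + ∑ j ∈ T \ D, a j = ∑ j ∈ T, a j :=
    Finset.sum_inter_add_sum_sdiff T D a
  rw [Finset.inter_comm] at e2
  linarith


open DRLR in
/-- the maximum over the exponentially large set `C` of the separation objective
`G(z) = exp(-s - λ d_C(z, zⁱ)) + exp(r - y β_Cᵀz - s - λ d_C(z, zⁱ))` is attained at one of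
the `m + 1` greedily constructed candidates `z^{(δ)}` (equal to `z_j^⋆` on the `δ` indices
with largest `a_j` according to the sorting `π`, and to `zⁱ_j` elsewhere). -/
theorem separation_maximum_attained_at_greedy_candidate
    (m : ℕ) (hm : 1 ≤ m) (k : Fin m → ℕ) (hk : ∀ j, 2 ≤ k j)
    (βC : CatSpace m k) (y : ℝ) (hy : y = -1 ∨ y = 1)
    (zi : CatSpace m k) (hzi : memCat m k zi)
    (lam s r p : ℝ) (hlam : 0 ≤ lam) (hp : 0 < p)
    (zstar : CatSpace m k)
    (hzstar_mem : ∀ j, zstar j ∈ catCube (k j))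
    (hzstar_ne : ∀ j, zstar j ≠ zi j)
    (hzstar_max : ∀ j, ∀ w ∈ catCube (k j), w ≠ zi j →
      -(y * ∑ i, βC j i * w i) ≤ -(y * ∑ i, βC j i * zstar j i))
    (a : Fin m → ℝ) (ha : ∀ j, a j = -(y * ∑ i, βC j i * (zstar j i - zi j i)))
    (π : Equiv.Perm (Fin m))
    (hπ : ∀ j j' : Fin m, (π j : ℕ) < (π j' : ℕ) → a j' ≤ a j)
    (G : CatSpace m k → ℝ)
    (hG : ∀ z, G z = Real.exp (-s - lam * dCat m k p z zi) +
        Real.exp (r - y * (∑ j, ∑ i, βC j i * z j i) - s - lam * dCat m k p z zi))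
    (cand : ℕ → CatSpace m k)
    (hcand : ∀ δ j, cand δ j = if (π j : ℕ) < δ then zstar j else zi j) :
    ∃ δ ≤ m, IsGreatest {t : ℝ | ∃ z : CatSpace m k, memCat m k z ∧ t = G z} (G (cand δ)) := by
    classical
  have hcand_mem : ∀ δ, memCat m k (cand δ) := by
    intro δ j
    rw [hcand]
    split_ifs
    · exact hzstar_mem j
    · exact hzi j
  have hdC : ∀ z : CatSpace m k,
      dCat m k p z zi = (((Finset.univ.filter (fun j => z j ≠ zi j)).card : ℝ)) ^ (1/p) := by
    intro z
    have hset : {j | z j ≠ zi j} = ↑(Finset.univ.filter (fun j => z j ≠ zi j)) := by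
      ext j; simp
    rw [dCat, hset, Set.ncard_coe_finset]
  have hcand_dev : ∀ δ, (Finset.univ.filter (fun j => cand δ j ≠ zi j))
      = Finset.univ.filter (fun j : Fin m => (π j : ℕ) < δ) := by
    intro δ
    ext j
    simp only [Finset.mem_filter, Finset.mem_univ, true_and]
    rw [hcand]
    by_cases h : (π j : ℕ) < δ <;> simp [h, hzstar_ne j]
  have ha' : ∀ j, a j = (y * ∑ i, βC j i * zi j i) - y * ∑ i, βC j i * zstar j i := by
    intro j
    have h : ∑ i, βC j i * (zstar j i - zi j i)
        = ∑ i, βC j i * zstar j i - ∑ i, βC j i * zi j i := by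
      simp [mul_sub, Finset.sum_sub_distrib]
    rw [ha j, h]; ring
  have hmax' : ∀ j, ∀ w ∈ catCube (k j), w ≠ zi j →
      (y * ∑ i, βC j i * zi j i) - y * ∑ i, βC j i * w i ≤ a j := by
    intro j w hw hne
    have h := hzstar_max j w hw hne
    rw [ha' j]
    linarith
  have hEsum : ∀ z : CatSpace m k,
      y * (∑ j, ∑ i, βC j i * zi j i) - y * (∑ j, ∑ i, βC j i * z j i)
      = ∑ j, ((y * ∑ i, βC j i * zi j i) - y * ∑ i, βC j i * z j i) := by
    intro z
    rw [Finset.sum_sub_distrib, ← Finset.mul_sum, ← Finset.mul_sum]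
  have hDsum : ∀ z : CatSpace m k,
      ∑ j, ((y * ∑ i, βC j i * zi j i) - y * ∑ i, βC j i * z j i)
      = ∑ j ∈ Finset.univ.filter (fun j => z j ≠ zi j),
          ((y * ∑ i, βC j i * zi j i) - y * ∑ i, βC j i * z j i) := by
    intro z
    refine (Finset.sum_subset (Finset.subset_univ _) ?_).symm
    intro j _ hj
    simp only [Finset.mem_filter, Finset.mem_univ, true_and, not_not] at hj
    rw [hj]; ring
  have hkey : ∀ z : CatSpace m k, memCat m k z →
      G z ≤ G (cand (Finset.univ.filter (fun j => z j ≠ zi j)).card) := by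
    intro z hz
    set D := Finset.univ.filter (fun j => z j ≠ zi j) with hD
    set δ := D.card with hδ
    have hδm : δ ≤ m := by simpa using Finset.card_le_univ D
    have hdz : dCat m k p z zi = dCat m k p (cand δ) zi := by
      rw [hdC z, hdC (cand δ), hcand_dev δ, card_filter_perm_lt m δ hδm π]
    have h1 : y * (∑ j, ∑ i, βC j i * zi j i) - y * (∑ j, ∑ i, βC j i * z j i)
        ≤ ∑ j ∈ D, a j := by
      rw [hEsum z, hDsum z]
      apply Finset.sum_le_sum
      intro j hj
      have hjne : z j ≠ zi j := by
        simpa [hD, Finset.mem_filter] using hj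
      exact hmax' j (z j) (hz j) hjne
    have h2 : ∑ j ∈ D, a j ≤ ∑ j ∈ Finset.univ.filter (fun j : Fin m => (π j : ℕ) < δ), a j :=
      sum_top m a π hπ D
    have h3 : y * (∑ j, ∑ i, βC j i * zi j i) - y * (∑ j, ∑ i, βC j i * cand δ j i)
        = ∑ j ∈ Finset.univ.filter (fun j : Fin m => (π j : ℕ) < δ), a j := by
      rw [hEsum (cand δ), hDsum (cand δ), hcand_dev δ]
      apply Finset.sum_congr rfl
      intro j hj
      have hjlt : (π j : ℕ) < δ := by
        simpa using hj
      rw [hcand δ j, if_pos hjlt, ha' j]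
    rw [hG z, hG (cand δ), ← hdz]
    exact add_le_add le_rfl (Real.exp_le_exp.mpr (by linarith))
  obtain ⟨δ0, hδ0mem, hδ0max⟩ := Finset.exists_max_image (Finset.range (m+1))
    (fun δ => G (cand δ)) ⟨0, by simp⟩
  refine ⟨δ0, Nat.lt_succ_iff.mp (Finset.mem_range.mp hδ0mem), ⟨cand δ0, hcand_mem δ0, rfl⟩, ?_⟩
  rintro t ⟨z, hz, rfl⟩
  have h1 := hkey z hz
  have hδm : (Finset.univ.filter (fun j => z j ≠ zi j)).card ≤ m := by
    simpa using Finset.card_le_univ (Finset.univ.filter (fun j => z j ≠ zi j))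
  have h2 := hδ0max _ (Finset.mem_range.mpr (Nat.lt_succ_of_le hδm))
  exact le_trans h1 h2
end
end

section
/- Fix ε > 0, β = (β₀, β_N, β_C) ∈ ℝ^{n+k+1}, and data points ξⁱ = (xⁱ, zⁱ, yⁱ) ∈ Ξ for i ∈ [N]. Then sup{ E_Q[l_β] : Q ∈ B_ε(P̂_N) } equals the supremum of (1/N)∑_{i=1}^N ∫_Ξ l_β dQⁱ over all N-tuples of probability measures Q¹, …, Qᴺ on Ξ satisfying (1/N)∑_{i=1}^N ∫_Ξ d(ξ, ξⁱ) dQⁱ(ξ) ≤ ε. -/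
/-!
A coupling `π` of `Q` with the empirical measure `P̂_N` disintegrates along its second marginal:
`π = (1/N) ∑ᵢ Qⁱ ⊗ δ_{ξⁱ}` with `Qⁱ` the conditional law of the first coordinate given `ξⁱ`.
This turns the transport cost of `π` and the expected loss under `Q = π.fst` into the averages
`(1/N) ∑ᵢ ∫ d(·, ξⁱ) dQⁱ` and `(1/N) ∑ᵢ ∫ l_β dQⁱ`; conversely every tuple `(Qⁱ)` glues to such
a coupling of its average with `P̂_N`.

The infimum defining the Wasserstein distance need not be attained, so for `a < 1` we only get a
coupling of cost below `ε / a`. Replacing `Qⁱ` by `a Qⁱ + (1 - a) δ_{ξⁱ}` multiplies the cost by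
`a` (as `d(ξⁱ, ξⁱ) = 0`) and the loss by at least `a`; letting `a ↑ 1` gives the equality.
-/

open scoped BigOperators ENNReal NNReal
open MeasureTheory

noncomputable section

open scoped ProbabilityTheory

namespace DRLR

section Tuples

variable {α β : Type*} [MeasurableSpace α] [MeasurableSpace β] {N : ℕ}

def avgLIntegral (g : Fin N → α → ℝ≥0∞) (Q : Fin N → Measure α) : ℝ≥0∞ :=
  (N : ℝ≥0∞)⁻¹ * ∑ i, ∫⁻ a, g i a ∂Q i

def glue (Q : Fin N → Measure α) (x : Fin N → β) : Measure (α × β) :=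
  (N : ℝ≥0∞)⁻¹ • ∑ i, (Q i).map (fun a => (a, x i))

lemma lintegral_smul_sum (Q : Fin N → Measure α) (g : α → ℝ≥0∞) :
    ∫⁻ a, g a ∂((N : ℝ≥0∞)⁻¹ • ∑ i, Q i) = avgLIntegral (fun _ => g) Q := by
  rw [lintegral_smul_measure, lintegral_finsetSum_measure, avgLIntegral, smul_eq_mul]

lemma isProbabilityMeasure_smul_sum (hN : N ≠ 0) {Q : Fin N → Measure α}
    (hQ : ∀ i, IsProbabilityMeasure (Q i)) :
    IsProbabilityMeasure ((N : ℝ≥0∞)⁻¹ • ∑ i, Q i) := by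
  constructor
  simp only [Measure.smul_apply, Measure.finsetSum_apply, measure_univ, Finset.sum_const,
    Finset.card_univ, Fintype.card_fin, nsmul_eq_mul, mul_one, smul_eq_mul]
  exact ENNReal.inv_mul_cancel (by exact_mod_cast hN) (ENNReal.natCast_ne_top N)

lemma lintegral_glue [MeasurableSingletonClass β] (Q : Fin N → Measure α) (x : Fin N → β)
    (g : α × β → ℝ≥0∞) :
    ∫⁻ q, g q ∂glue Q x = avgLIntegral (fun i a => g (a, x i)) Q := by
  simp only [glue, lintegral_smul_measure, lintegral_finsetSum_measure, smul_eq_mul,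
    avgLIntegral, (measurableEmbedding_prod_mk_right _).lintegral_map]

lemma fst_glue (Q : Fin N → Measure α) (x : Fin N → β) :
    (glue Q x).fst = (N : ℝ≥0∞)⁻¹ • ∑ i, Q i := by
  simp [glue, Measure.fst, Measure.map_smul, Measure.map_finset_sum measurable_fst.aemeasurable,
    Measure.map_map measurable_fst measurable_prodMk_right, Function.comp_def]

lemma snd_glue {Q : Fin N → Measure α} (hQ : ∀ i, IsProbabilityMeasure (Q i))
    (x : Fin N → β) :
    (glue Q x).snd = (N : ℝ≥0∞)⁻¹ • ∑ i, Measure.dirac (x i) := by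
  simp [glue, Measure.snd, Measure.map_smul, Measure.map_finset_sum measurable_snd.aemeasurable,
    Measure.map_map measurable_snd measurable_prodMk_right, Function.comp_def]

lemma exists_eq_glue_of_snd_eq [StandardBorelSpace α] [Nonempty α] [MeasurableSingletonClass β]
    (x : Fin N → β) (π : Measure (α × β)) [IsFiniteMeasure π]
    (hπ : π.snd = (N : ℝ≥0∞)⁻¹ • ∑ i, Measure.dirac (x i)) :
    ∃ Q : Fin N → Measure α, (∀ i, IsProbabilityMeasure (Q i)) ∧ π = glue Q x := by
  set ρ := π.map Prod.swap
  refine ⟨fun i => ρ.condKernel (x i), fun i => inferInstance, ?_⟩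
  ext s hs
  have hρ : ρ.fst = (N : ℝ≥0∞)⁻¹ • ∑ i, Measure.dirac (x i) := by rw [Measure.fst_map_swap, hπ]
  calc π s = ρ (Prod.swap ⁻¹' s) := by
        rw [Measure.map_apply measurable_swap (measurable_swap hs), ← Set.preimage_comp,
          Prod.swap_swap_eq, Set.preimage_id]
    _ = (ρ.fst ⊗ₘ ρ.condKernel) (Prod.swap ⁻¹' s) := by rw [ρ.disintegrate ρ.condKernel]
    _ = glue (fun i => ρ.condKernel (x i)) x s := by
        rw [Measure.compProd_apply (measurable_swap hs), hρ, lintegral_smul_measure,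
          lintegral_finsetSum_measure]
        simp only [lintegral_dirac, smul_eq_mul, glue, Measure.smul_apply,
          Measure.finsetSum_apply, Measure.map_apply measurable_prodMk_right hs]
        rfl

def mix (a : ℝ≥0∞) (Q : Fin N → Measure α) (x : Fin N → α) (i : Fin N) : Measure α :=
  a • Q i + (1 - a) • Measure.dirac (x i)

lemma isProbabilityMeasure_mix {a : ℝ≥0∞} (ha : a ≤ 1) {Q : Fin N → Measure α}
    (hQ : ∀ i, IsProbabilityMeasure (Q i)) (x : Fin N → α) (i : Fin N) :
    IsProbabilityMeasure (mix a Q x i) := by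
  constructor
  simp [mix, add_tsub_cancel_of_le ha]

lemma avgLIntegral_mix [MeasurableSingletonClass α] (g : Fin N → α → ℝ≥0∞) (a : ℝ≥0∞)
    (Q : Fin N → Measure α) (x : Fin N → α) :
    avgLIntegral g (mix a Q x) =
      a * avgLIntegral g Q + (1 - a) * ((N : ℝ≥0∞)⁻¹ * ∑ i, g i (x i)) := by
  simp only [avgLIntegral, mix, lintegral_add_measure, lintegral_smul_measure, lintegral_dirac,
    smul_eq_mul, Finset.sum_add_distrib, ← Finset.mul_sum]
  ring

lemma exists_shrunk_tuple_of_snd_eq [StandardBorelSpace α] [Nonempty α]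
    (x : Fin N → α) (c : α → α → ℝ≥0∞) (hc : ∀ i, c (x i) (x i) = 0) (f : α → ℝ≥0∞)
    (π : Measure (α × α)) [IsFiniteMeasure π]
    (hπ : π.snd = (N : ℝ≥0∞)⁻¹ • ∑ i, Measure.dirac (x i)) {a : ℝ≥0∞} (ha : a ≤ 1) :
    ∃ Q : Fin N → Measure α, (∀ i, IsProbabilityMeasure (Q i)) ∧
      avgLIntegral (fun i ξ => c ξ (x i)) Q = a * ∫⁻ q, c q.1 q.2 ∂π ∧
      a * ∫⁻ ξ, f ξ ∂π.fst ≤ avgLIntegral (fun _ => f) Q := by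
  obtain ⟨Q, hQ, rfl⟩ := exists_eq_glue_of_snd_eq x π hπ
  refine ⟨mix a Q x, isProbabilityMeasure_mix ha hQ x, ?_, ?_⟩
  · simp [avgLIntegral_mix, lintegral_glue, hc]
  · rw [avgLIntegral_mix, fst_glue, lintegral_smul_sum]
    exact le_self_add

end Tuples

variable {n m : ℕ} {k : Fin m → ℕ}

lemma isClosed_catCube (s : ℕ) : IsClosed (catCube s) := by
  simp only [catCube, Set.ofPred_and, Set.ofPred_forall, Set.ofPred_or]
  exact (isClosed_iInter fun i => (isClosed_eq (continuous_apply i) continuous_const).union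
    (isClosed_eq (continuous_apply i) continuous_const)).inter
    (isClosed_le (continuous_finsetSum _ fun i _ => continuous_apply i) continuous_const)

lemma isClosed_XiSet : IsClosed (XiSet n m k) := by
  simp only [XiSet, memCat, Set.ofPred_and, Set.ofPred_forall, Set.ofPred_or]
  exact (isClosed_iInter fun j =>
    (isClosed_catCube (k j)).preimage ((continuous_apply j).comp continuous_snd.fst)).inter
    ((isClosed_eq continuous_snd.snd continuous_const).union
      (isClosed_eq continuous_snd.snd continuous_const))

instance : StandardBorelSpace (Xi n m k) := isClosed_XiSet.measurableSet.standardBorel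

lemma dCat_self {p : ℝ} (hp : p ≠ 0) (z : CatSpace m k) : dCat m k p z z = 0 := by
  simp [dCat, hp]

lemma gdist_self {nrm : (Fin n → ℝ) → ℝ} (hnrm : nrm 0 = 0) (κ : ℝ) {p : ℝ} (hp : p ≠ 0)
    (ξ : Amb n m k) : gdist n m k nrm κ p ξ ξ = 0 := by
  simp [gdist, hnrm, dCat_self hp]

section WorstCase

variable {nrm : (Fin n → ℝ) → ℝ} {κ p ε β₀ : ℝ} {βN : Fin n → ℝ}
  {βC : CatSpace m k} {N : ℕ} (ξdata : Fin N → Xi n m k)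

lemma avgLIntegral_logloss_le_worstCase (hN : N ≠ 0) {Q : Fin N → Measure (Xi n m k)}
    (hQ : ∀ i, IsProbabilityMeasure (Q i))
    (hcost : avgLIntegral (fun i ξ => ENNReal.ofReal (gdist n m k nrm κ p ξ.1 (ξdata i).1)) Q
      ≤ ENNReal.ofReal ε) :
    avgLIntegral (fun _ ξ => ENNReal.ofReal (logloss n m k β₀ βN βC ξ.1)) Q ≤
      worstCase n m k nrm κ p ε β₀ βN βC N ξdata := by
  have hQavg := isProbabilityMeasure_smul_sum hN hQ
  have hπ : glue Q ξdata ∈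
      couplings n m k ((N : ℝ≥0∞)⁻¹ • ∑ i, Q i) (empMeasure n m k N ξdata) :=
    ⟨⟨by rw [← Measure.fst_univ, fst_glue]; exact hQavg.1⟩, fst_glue Q ξdata, snd_glue hQ ξdata⟩
  refine le_sSup ⟨_, hQavg, ?_, (lintegral_smul_sum Q _).symm⟩
  calc wass n m k nrm κ p _ _
      ≤ ∫⁻ q, ENNReal.ofReal (gdist n m k nrm κ p q.1.1 q.2.1) ∂glue Q ξdata := iInf₂_le _ hπ
    _ = _ := lintegral_glue Q ξdata _
    _ ≤ _ := hcost

lemma exists_mul_expLoss_le_avgLIntegral_logloss (hnrm : nrm 0 = 0) (hp : p ≠ 0) (hε : 0 < ε)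
    {Q : Measure (Xi n m k)} [IsProbabilityMeasure Q]
    (hW : wass n m k nrm κ p Q (empMeasure n m k N ξdata) ≤ ENNReal.ofReal ε)
    {a : ℝ≥0∞} (ha : a < 1) :
    ∃ Q' : Fin N → Measure (Xi n m k), (∀ i, IsProbabilityMeasure (Q' i)) ∧
      avgLIntegral (fun i ξ => ENNReal.ofReal (gdist n m k nrm κ p ξ.1 (ξdata i).1)) Q'
        ≤ ENNReal.ofReal ε ∧
      a * expLoss n m k β₀ βN βC Q ≤
        avgLIntegral (fun _ ξ => ENNReal.ofReal (logloss n m k β₀ βN βC ξ.1)) Q' := by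
  have : Nonempty (Xi n m k) := nonempty_of_isProbabilityMeasure Q
  have hslack : ENNReal.ofReal ε < a⁻¹ * ENNReal.ofReal ε := by
    simpa using ENNReal.mul_lt_mul_left (ENNReal.ofReal_pos.2 hε).ne' ENNReal.ofReal_ne_top
      (ENNReal.one_lt_inv.2 ha)
  obtain ⟨π, ⟨hπ, hπfst, hπsnd⟩, hcost⟩ : ∃ π ∈ couplings n m k Q (empMeasure n m k N ξdata),
      ∫⁻ q, ENNReal.ofReal (gdist n m k nrm κ p q.1.1 q.2.1) ∂π < a⁻¹ * ENNReal.ofReal ε := by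
    simpa [wass, iInf_lt_iff] using hW.trans_lt hslack
  obtain ⟨Q', hQ', hcost', hloss'⟩ := exists_shrunk_tuple_of_snd_eq ξdata
    (fun ξ ξ' => ENNReal.ofReal (gdist n m k nrm κ p ξ.1 ξ'.1))
    (fun i => by simp [gdist_self hnrm κ hp])
    (fun ξ => ENNReal.ofReal (logloss n m k β₀ βN βC ξ.1)) π hπsnd ha.le
  refine ⟨Q', hQ', ?_, by rwa [expLoss, ← hπfst]⟩
  calc _ = a * ∫⁻ q, ENNReal.ofReal (gdist n m k nrm κ p q.1.1 q.2.1) ∂π := hcost'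
    _ ≤ a * (a⁻¹ * ENNReal.ofReal ε) := by gcongr
    _ ≤ ENNReal.ofReal ε := by
      rw [← mul_assoc]
      exact mul_le_of_le_one_left' (ENNReal.mul_inv_le_one a)

end WorstCase

end DRLR

open DRLR in
theorem worst_case_decomposition_general
    (n m : ℕ) (k : Fin m → ℕ)
    (nrm : (Fin n → ℝ) → ℝ)
    (hnrm_def : ∀ w, nrm w = 0 ↔ w = 0)
    (κ p : ℝ) (hp : 0 < p)
    (ε : ℝ) (hε : 0 < ε)
    (β₀ : ℝ) (βN : Fin n → ℝ) (βC : CatSpace m k)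
    (N : ℕ) (hN : 0 < N) (ξdata : Fin N → Xi n m k) :
    worstCase n m k nrm κ p ε β₀ βN βC N ξdata =
      sSup {t : ℝ≥0∞ | ∃ Q : Fin N → MeasureTheory.Measure (Xi n m k),
        (∀ i, MeasureTheory.IsProbabilityMeasure (Q i)) ∧
        (N : ℝ≥0∞)⁻¹ *
            ∑ i, ∫⁻ ξ, ENNReal.ofReal (gdist n m k nrm κ p ξ.1 (ξdata i).1) ∂(Q i)
          ≤ ENNReal.ofReal ε ∧
        t = (N : ℝ≥0∞)⁻¹ * ∑ i, expLoss n m k β₀ βN βC (Q i)} := by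
  refine le_antisymm (sSup_le ?_) (sSup_le ?_)
  · rintro _ ⟨Q, hQ, hW, rfl⟩
    refine ENNReal.le_of_forall_lt_one_mul_le fun a ha => ?_
    obtain ⟨Q', hQ', hcost, hloss⟩ :=
      exists_mul_expLoss_le_avgLIntegral_logloss ξdata ((hnrm_def 0).2 rfl) hp.ne' hε hW ha
    exact hloss.trans (le_sSup ⟨Q', hQ', hcost, rfl⟩)
  · rintro _ ⟨Q, hQ, hcost, rfl⟩
    exact avgLIntegral_logloss_le_worstCase ξdata hN.ne' hQ hcost

open DRLR in
/-- the worst-case expected log-loss over the Wasserstein ball `B_ε(P̂_N)` equals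
the supremum of `(1/N) ∑ᵢ ∫ l_β dQⁱ` over all `N`-tuples of probability measures `Q¹, …, Qᴺ`
on `Ξ` satisfying `(1/N) ∑ᵢ ∫ d(ξ, ξⁱ) dQⁱ(ξ) ≤ ε`. -/
theorem worst_case_decomposition
    (n m : ℕ) (k : Fin m → ℕ) (hk : ∀ j, 2 ≤ k j)
    (nrm : (Fin n → ℝ) → ℝ)
    (hnrm_def : ∀ w, nrm w = 0 ↔ w = 0)
    (hnrm_smul : ∀ (c : ℝ) (w : Fin n → ℝ), nrm (c • w) = |c| * nrm w)
    (hnrm_add : ∀ w w', nrm (w + w') ≤ nrm w + nrm w')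
    (κ p : ℝ) (hκ : 0 < κ) (hp : 0 < p)
    (ε : ℝ) (hε : 0 < ε)
    (β₀ : ℝ) (βN : Fin n → ℝ) (βC : CatSpace m k)
    (N : ℕ) (hN : 0 < N) (ξdata : Fin N → Xi n m k) :
    worstCase n m k nrm κ p ε β₀ βN βC N ξdata =
      sSup {t : ℝ≥0∞ | ∃ Q : Fin N → MeasureTheory.Measure (Xi n m k),
        (∀ i, MeasureTheory.IsProbabilityMeasure (Q i)) ∧
        (N : ℝ≥0∞)⁻¹ *
            ∑ i, ∫⁻ ξ, ENNReal.ofReal (gdist n m k nrm κ p ξ.1 (ξdata i).1) ∂(Q i)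
          ≤ ENNReal.ofReal ε ∧
        t = (N : ℝ≥0∞)⁻¹ * ∑ i, expLoss n m k β₀ βN βC (Q i)} :=
  worst_case_decomposition_general n m k nrm hnrm_def κ p hp ε hε β₀ βN βC N hN ξdata
end
end
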